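/- arXiv:1802.05502 — 4 statements merged into one kernel-verified Lean document; each statement's English description precedes it below -/
import Mathlib

section
/- Let U ⊆ ℝⁿ be an open set, let w be a smooth harmonic function on U, and define u(x) = −2w(x) + (|x|² − 1)ℰw(x). Then Δu = 2n·ℰw + 4·ℰ²w on U. -/
open scoped ContDiff

/-- The Euclidean Laplacian `Δf(x) = ∑ i, ∂²f/∂xᵢ²(x)`. -/
noncomputable def lap {n : ℕ} (f : EuclideanSpace ℝ (Fin n) → ℝ)
    (x : EuclideanSpace ℝ (Fin n)) : ℝ :=
  ∑ i : Fin n,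
    fderiv ℝ (fun y => fderiv ℝ f y (EuclideanSpace.single i 1)) x (EuclideanSpace.single i 1)

/-- The Euler operator `ℰf(x) = ∑ i, xᵢ ∂f/∂xᵢ(x) = ⟨x, ∇f(x)⟩ = df_x(x)`. -/
noncomputable def euler {n : ℕ} (f : EuclideanSpace ℝ (Fin n) → ℝ)
    (x : EuclideanSpace ℝ (Fin n)) : ℝ :=
  fderiv ℝ f x x

namespace LapOfUAux

variable {n : ℕ}

/-- partial derivative in direction `i` -/
noncomputable def pd (i : Fin n) (f : EuclideanSpace ℝ (Fin n) → ℝ)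
    (x : EuclideanSpace ℝ (Fin n)) : ℝ :=
  fderiv ℝ f x (EuclideanSpace.single i 1)

lemma lap_eq (f : EuclideanSpace ℝ (Fin n) → ℝ) (x : EuclideanSpace ℝ (Fin n)) :
    lap f x = ∑ i, pd i (pd i f) x := rfl

lemma one_le_infty : (1 : WithTop ℕ∞) ≤ ∞ := by
  rw [show (1 : WithTop ℕ∞) = ((1:ℕ∞) : WithTop ℕ∞) from rfl]
  exact WithTop.coe_le_coe.mpr le_top

lemma two_le_infty : (2 : WithTop ℕ∞) ≤ ∞ := by
  rw [show (2 : WithTop ℕ∞) = ((2:ℕ∞) : WithTop ℕ∞) from rfl]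
  exact WithTop.coe_le_coe.mpr le_top

section OnU

variable {U : Set (EuclideanSpace ℝ (Fin n))} (hU : IsOpen U)
variable {f g : EuclideanSpace ℝ (Fin n) → ℝ} {x : EuclideanSpace ℝ (Fin n)}

include hU

lemma diffAt (hf : ContDiffOn ℝ ∞ f U) (hx : x ∈ U) : DifferentiableAt ℝ f x :=
  (hf.contDiffAt (hU.mem_nhds hx)).differentiableAt (by simp)

lemma fderiv_contDiffOn (hf : ContDiffOn ℝ ∞ f U) :
    ContDiffOn ℝ ∞ (fderiv ℝ f) U :=
  ((contDiffOn_infty_iff_fderiv_of_isOpen hU).1 hf).2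

lemma pd_contDiffOn (hf : ContDiffOn ℝ ∞ f U) (i : Fin n) :
    ContDiffOn ℝ ∞ (pd i f) U :=
  (fderiv_contDiffOn hU hf).clm_apply contDiffOn_const

lemma euler_contDiffOn (hf : ContDiffOn ℝ ∞ f U) :
    ContDiffOn ℝ ∞ (euler f) U :=
  (fderiv_contDiffOn hU hf).clm_apply contDiffOn_id

lemma pd_congr (h : Set.EqOn f g U) (hx : x ∈ U) (i : Fin n) :
    pd i f x = pd i g x := by
  unfold pd
  rw [Filter.EventuallyEq.fderiv_eq (Filter.eventuallyEq_of_mem (hU.mem_nhds hx) h)]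

lemma pd_pd_comm (hf : ContDiffOn ℝ ∞ f U) (hx : x ∈ U) (i j : Fin n) :
    pd j (pd i f) x = pd i (pd j f) x := by
  have hdf : DifferentiableAt ℝ (fderiv ℝ f) x :=
    ((fderiv_contDiffOn hU hf).contDiffAt (hU.mem_nhds hx)).differentiableAt (by simp)
  have key : ∀ a b : Fin n, pd b (pd a f) x
      = fderiv ℝ (fderiv ℝ f) x (EuclideanSpace.single b 1) (EuclideanSpace.single a 1) := by
    intro a b
    unfold pd
    rw [fderiv_clm_apply hdf (differentiableAt_const _)]
    simp
  rw [key i j, key j i]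
  exact (hf.contDiffAt (hU.mem_nhds hx)).isSymmSndFDerivAt (by rw [minSmoothness_of_isRCLikeNormedField]; exact two_le_infty) _ _

end OnU

section Arith

variable {f g : EuclideanSpace ℝ (Fin n) → ℝ} {x : EuclideanSpace ℝ (Fin n)}

lemma pd_add (hf : DifferentiableAt ℝ f x) (hg : DifferentiableAt ℝ g x) (i : Fin n) :
    pd i (fun y => f y + g y) x = pd i f x + pd i g x := by
  unfold pd
  rw [fderiv_fun_add hf hg]
  simp

lemma pd_mul (hf : DifferentiableAt ℝ f x) (hg : DifferentiableAt ℝ g x) (i : Fin n) :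
    pd i (fun y => f y * g y) x = f x * pd i g x + g x * pd i f x := by
  unfold pd
  rw [fderiv_fun_mul hf hg]
  simp

lemma pd_const_mul (hf : DifferentiableAt ℝ f x) (c : ℝ) (i : Fin n) :
    pd i (fun y => c * f y) x = c * pd i f x := by
  unfold pd
  rw [fderiv_const_mul hf]
  simp

lemma pd_sub_const (hf : DifferentiableAt ℝ f x) (c : ℝ) (i : Fin n) :
    pd i (fun y => f y - c) x = pd i f x := by
  unfold pd
  rw [fderiv_sub_const]

lemma pd_const (c : ℝ) (i : Fin n) : pd i (fun _ => c) x = 0 := by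
  unfold pd
  simp

lemma pd_sum {ι : Type*} {s : Finset ι} {F : ι → EuclideanSpace ℝ (Fin n) → ℝ}
    (h : ∀ a ∈ s, DifferentiableAt ℝ (F a) x) (i : Fin n) :
    pd i (fun y => ∑ a ∈ s, F a y) x = ∑ a ∈ s, pd i (F a) x := by
  unfold pd
  rw [fderiv_fun_sum h]
  simp

lemma diff_coord {i : Fin n} : DifferentiableAt ℝ (fun y : EuclideanSpace ℝ (Fin n) => y i) x :=
  (PiLp.proj 2 (fun _ : Fin n => ℝ) i : EuclideanSpace ℝ (Fin n) →L[ℝ] ℝ).differentiableAt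

lemma pd_coord (i j : Fin n) :
    pd j (fun y : EuclideanSpace ℝ (Fin n) => y i) x = if i = j then 1 else 0 := by
  unfold pd
  rw [show (fun y : EuclideanSpace ℝ (Fin n) => y i)
      = ⇑(PiLp.proj 2 (fun _ : Fin n => ℝ) i : EuclideanSpace ℝ (Fin n) →L[ℝ] ℝ) from rfl]
  rw [ContinuousLinearMap.fderiv]
  simp [EuclideanSpace.single_apply]

lemma decomp (x : EuclideanSpace ℝ (Fin n)) :
    x = ∑ i, x i • EuclideanSpace.single i (1:ℝ) := by
  ext j
  rw [WithLp.ofLp_sum, Finset.sum_apply]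
  simp [EuclideanSpace.single_apply]

lemma euler_eq_sum (hf : DifferentiableAt ℝ f x) :
    euler f x = ∑ i, x i * pd i f x := by
  have h : fderiv ℝ f x (∑ i, x i • EuclideanSpace.single i (1:ℝ)) = ∑ i, x i * pd i f x := by
    rw [map_sum]
    simp [pd]
  rw [← decomp x] at h
  exact h

end Arith

/-- the squared norm as a sum of squares -/
noncomputable def Nq (y : EuclideanSpace ℝ (Fin n)) : ℝ := ∑ i, y i * y i

lemma norm_sq_eq (y : EuclideanSpace ℝ (Fin n)) : ‖y‖^2 = Nq y := by
  rw [EuclideanSpace.norm_eq, Real.sq_sqrt (by positivity)]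
  simp [Nq, sq]

lemma diff_Nq {x : EuclideanSpace ℝ (Fin n)} : DifferentiableAt ℝ (Nq (n := n)) x :=
  DifferentiableAt.fun_sum fun i _ => diff_coord.fun_mul diff_coord

lemma pd_Nq (j : Fin n) (x : EuclideanSpace ℝ (Fin n)) : pd j Nq x = 2 * x j := by
  have h : Nq (n := n) = fun y => ∑ i, y i * y i := rfl
  rw [h, pd_sum (fun a _ => diff_coord.fun_mul diff_coord) j]
  rw [Finset.sum_congr rfl fun i _ => (pd_mul diff_coord diff_coord j).trans (by rw [pd_coord])]
  simp only [mul_ite, mul_one, mul_zero, Finset.sum_add_distrib, Finset.sum_ite_eq',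
    Finset.mem_univ, if_true]
  ring

lemma pd_pd_Nq (j : Fin n) (x : EuclideanSpace ℝ (Fin n)) : pd j (pd j Nq) x = 2 := by
  have h : pd j (Nq (n := n)) = fun y => 2 * y j := funext fun y => pd_Nq j y
  rw [h, pd_const_mul diff_coord 2 j, pd_coord]
  simp

end LapOfUAux

open LapOfUAux

/-- If `w` is a smooth harmonic function on an open set `U ⊆ ℝⁿ` and
`u(x) = -2w(x) + (|x|² - 1)ℰw(x)`, then `Δu = 2n·ℰw + 4·ℰ²w` on `U`. -/
theorem lap_of_u (n : ℕ) (U : Set (EuclideanSpace ℝ (Fin n))) (hU : IsOpen U)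
    (w : EuclideanSpace ℝ (Fin n) → ℝ) (hw : ContDiffOn ℝ (⊤ : ℕ∞) w U)
    (hharm : ∀ x ∈ U, lap w x = 0)
    (u : EuclideanSpace ℝ (Fin n) → ℝ)
    (hu : ∀ x, u x = -2 * w x + (‖x‖ ^ 2 - 1) * euler w x) :
    ∀ x ∈ U, lap u x = 2 * (n : ℝ) * euler w x + 4 * euler (euler w) x := by
  intro x hx
  have hw' : ContDiffOn ℝ ∞ w U := hw.of_le (by simp)
  have hwd : ∀ y ∈ U, DifferentiableAt ℝ w y := fun y hy => diffAt hU hw' hy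
  have hpdw : ∀ i, ContDiffOn ℝ ∞ (pd i w) U := pd_contDiffOn hU hw'
  have hpdw2 : ∀ i j, ContDiffOn ℝ ∞ (pd j (pd i w)) U := fun i j => pd_contDiffOn hU (hpdw i) j
  have hv : ContDiffOn ℝ ∞ (euler w) U := euler_contDiffOn hU hw'
  have hvd : ∀ y ∈ U, DifferentiableAt ℝ (euler w) y := fun y hy => diffAt hU hv hy
  have hpdv : ∀ j, ContDiffOn ℝ ∞ (pd j (euler w)) U := pd_contDiffOn hU hv
  -- Step A : euler w = ∑ i, y i * pd i w y on U
  have hA : Set.EqOn (euler w) (fun y => ∑ i, y i * pd i w y) U := fun y hy =>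
    euler_eq_sum (hwd y hy)
  -- Step B : first derivatives of euler w
  have hB : ∀ j : Fin n, ∀ y ∈ U,
      pd j (euler w) y = pd j w y + ∑ i, y i * pd j (pd i w) y := by
    intro j y hy
    rw [pd_congr hU hA hy j,
      pd_sum (fun a _ => diff_coord.fun_mul (diffAt hU (hpdw a) hy)) j,
      Finset.sum_congr rfl fun i _ =>
        (pd_mul diff_coord (diffAt hU (hpdw i) hy) j).trans (by rw [pd_coord]),
      Finset.sum_add_distrib]
    simp [mul_ite, ite_mul, Finset.sum_ite_eq']
    ring
  -- Step C : second derivatives of euler w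
  have hC : ∀ j : Fin n, ∀ y ∈ U,
      pd j (pd j (euler w)) y
        = 2 * pd j (pd j w) y + ∑ i, y i * pd j (pd j (pd i w)) y := by
    intro j y hy
    have hEq : Set.EqOn (pd j (euler w))
        (fun z => pd j w z + ∑ i, z i * pd j (pd i w) z) U := fun z hz => hB j z hz
    rw [pd_congr hU hEq hy j,
      pd_add (diffAt hU (hpdw j) hy)
        (DifferentiableAt.fun_sum fun i _ => diff_coord.fun_mul (diffAt hU (hpdw2 i j) hy)) j,
      pd_sum (fun a _ => diff_coord.fun_mul (diffAt hU (hpdw2 a j) hy)) j,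
      Finset.sum_congr rfl fun i _ =>
        (pd_mul diff_coord (diffAt hU (hpdw2 i j) hy) j).trans (by rw [pd_coord]),
      Finset.sum_add_distrib]
    simp [mul_ite, ite_mul, Finset.sum_ite_eq']
    ring
  -- Step D : third derivative sums vanish by harmonicity
  have hD : ∀ i : Fin n, ∀ y ∈ U, ∑ j, pd j (pd j (pd i w)) y = 0 := by
    intro i y hy
    have hswap : ∀ j : Fin n, pd j (pd j (pd i w)) y = pd i (pd j (pd j w)) y := by
      intro j
      have h1 : Set.EqOn (pd j (pd i w)) (pd i (pd j w)) U := fun z hz =>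
        pd_pd_comm hU hw' hz i j
      calc pd j (pd j (pd i w)) y = pd j (pd i (pd j w)) y := pd_congr hU h1 hy j
        _ = pd i (pd j (pd j w)) y := pd_pd_comm hU (hpdw j) hy i j
    rw [Finset.sum_congr rfl fun j _ => hswap j]
    rw [show (∑ j, pd i (pd j (pd j w)) y)
        = pd i (fun z => ∑ j, pd j (pd j w) z) y from
      (pd_sum (fun a _ => diffAt hU (hpdw2 a a) hy) i).symm]
    have hlapw : Set.EqOn (fun z : EuclideanSpace ℝ (Fin n) => ∑ j, pd j (pd j w) z)
        (fun _ => (0:ℝ)) U := fun z hz => by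
      have h := hharm z hz
      rw [lap_eq] at h
      exact h
    rw [pd_congr hU hlapw hy i, pd_const]
  -- lap of euler w vanishes on U
  have hLapV : ∑ j, pd j (pd j (euler w)) x = 0 := by
    rw [Finset.sum_congr rfl fun j _ => hC j x hx, Finset.sum_add_distrib]
    have h1 : ∑ j : Fin n, 2 * pd j (pd j w) x = 0 := by
      rw [← Finset.mul_sum, ← lap_eq, hharm x hx, mul_zero]
    have h2 : ∑ j : Fin n, ∑ i : Fin n, x i * pd j (pd j (pd i w)) x = 0 := by
      rw [Finset.sum_comm]
      refine Finset.sum_eq_zero fun i _ => ?_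
      rw [← Finset.mul_sum, hD i x hx, mul_zero]
    rw [h1, h2, add_zero]
  -- rewrite u
  have hu' : u = fun y => -2 * w y + (Nq y - 1) * euler w y := funext fun y => by
    rw [hu y, norm_sq_eq]
  -- first derivatives of u on U
  have hBu : ∀ j : Fin n, ∀ y ∈ U, pd j u y
      = -2 * pd j w y + ((Nq y - 1) * pd j (euler w) y + euler w y * (2 * y j)) := by
    intro j y hy
    rw [hu']
    rw [pd_add ((hwd y hy).const_mul (-2)) ((diff_Nq.sub_const 1).fun_mul (hvd y hy)) j,
      pd_const_mul (hwd y hy) (-2) j,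
      pd_mul (diff_Nq.sub_const 1) (hvd y hy) j,
      pd_sub_const diff_Nq 1 j, pd_Nq]
  -- second derivatives of u at x
  have hCu : ∀ j : Fin n, pd j (pd j u) x
      = -2 * pd j (pd j w) x
        + ((Nq x - 1) * pd j (pd j (euler w)) x + pd j (euler w) x * (2 * x j)
          + (euler w x * 2 + pd j (euler w) x * (2 * x j))) := by
    intro j
    have hEq : Set.EqOn (pd j u)
        (fun z => -2 * pd j w z + ((Nq z - 1) * pd j (euler w) z + euler w z * (2 * z j))) U :=
      fun z hz => hBu j z hz
    have d1 : DifferentiableAt ℝ (fun z : EuclideanSpace ℝ (Fin n) => 2 * z j) x :=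
      diff_coord.const_mul 2
    rw [pd_congr hU hEq hx j,
      pd_add ((diffAt hU (hpdw j) hx).const_mul (-2))
        (((diff_Nq.sub_const 1).fun_mul (diffAt hU (hpdv j) hx)).fun_add ((hvd x hx).fun_mul d1)) j,
      pd_const_mul (diffAt hU (hpdw j) hx) (-2) j,
      pd_add ((diff_Nq.sub_const 1).fun_mul (diffAt hU (hpdv j) hx)) ((hvd x hx).fun_mul d1) j,
      pd_mul (diff_Nq.sub_const 1) (diffAt hU (hpdv j) hx) j,
      pd_sub_const diff_Nq 1 j, pd_Nq,
      pd_mul (hvd x hx) d1 j,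
      pd_const_mul diff_coord 2 j, pd_coord]
    simp [mul_comm]
  -- assemble
  have e1 : ∑ j, pd j (pd j w) x = 0 := by rw [← lap_eq]; exact hharm x hx
  have e3 : ∑ j, x j * pd j (euler w) x = euler (euler w) x :=
    (euler_eq_sum (hvd x hx)).symm
  have expand : lap u x
      = -2 * (∑ j, pd j (pd j w) x) + (Nq x - 1) * (∑ j, pd j (pd j (euler w)) x)
        + 4 * (∑ j, x j * pd j (euler w) x) + (n : ℝ) * (2 * euler w x) := by
    rw [lap_eq, Finset.sum_congr rfl fun j _ => hCu j,
      Finset.mul_sum, Finset.mul_sum, Finset.mul_sum,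
      show ((n : ℝ) * (2 * euler w x)) = ∑ _j : Fin n, 2 * euler w x from by
        rw [Finset.sum_const, Finset.card_univ, Fintype.card_fin, nsmul_eq_mul],
      ← Finset.sum_add_distrib, ← Finset.sum_add_distrib, ← Finset.sum_add_distrib]
    exact Finset.sum_congr rfl fun j _ => by ring
  rw [expand, e1, hLapV, e3]
  ring
end

section
/- Let U ⊆ ℝⁿ be an open set, let w be a smooth harmonic function on U, and define u(x) = −2w(x) + (|x|² − 1)ℰw(x). Then ℰ(Δu) = 2n·ℰ²w + 4·ℰ³w on U. -/
open Filter Topology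

variable {n : ℕ}

/-- The standard basis vector. -/
noncomputable def ee (i : Fin n) : EuclideanSpace ℝ (Fin n) := EuclideanSpace.single i 1

lemma clm_apply_eq_sum (L : EuclideanSpace ℝ (Fin n) →L[ℝ] ℝ) (y : EuclideanSpace ℝ (Fin n)) :
    L y = ∑ i, y i * L (ee i) := by
  have hy : y = ∑ i, y i • ee i := by
    ext j
    rw [show ((∑ i, y i • ee i) j) = ∑ i, (y i • ee i) j by rw [WithLp.ofLp_sum, Finset.sum_apply]]
    simp [ee, EuclideanSpace.single_apply]
  conv_lhs => rw [hy]
  rw [map_sum]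
  simp [smul_eq_mul]

lemma fderiv_apply_const {F : Type*} [NormedAddCommGroup F] [NormedSpace ℝ F]
    {E' E'' : Type*} [NormedAddCommGroup E'] [NormedSpace ℝ E']
    [NormedAddCommGroup E''] [NormedSpace ℝ E'']
    {g : E'' → E' →L[ℝ] F} {y : E''} (hg : DifferentiableAt ℝ g y) (v : E') (a : E'') :
    fderiv ℝ (fun z => g z v) y a = fderiv ℝ g y a v := by
  rw [fderiv_clm_apply hg (differentiableAt_const v)]
  simp

lemma fderiv_apply_const2 {E'' : Type*} [NormedAddCommGroup E''] [NormedSpace ℝ E'']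
    {F G H : Type*} [NormedAddCommGroup F] [NormedSpace ℝ F]
    [NormedAddCommGroup G] [NormedSpace ℝ G] [NormedAddCommGroup H] [NormedSpace ℝ H]
    {g : E'' → F →L[ℝ] G →L[ℝ] H} {y : E''} (hg : DifferentiableAt ℝ g y) (b : F) (c : G)
    (a : E'') :
    fderiv ℝ (fun z => g z b c) y a = fderiv ℝ g y a b c := by
  rw [fderiv_apply_const (hg.clm_apply (differentiableAt_const b)) c a,
    fderiv_apply_const hg b a]

lemma fderiv_euler_apply {g : EuclideanSpace ℝ (Fin n) → ℝ} {y : EuclideanSpace ℝ (Fin n)}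
    (hg : DifferentiableAt ℝ (fderiv ℝ g) y) (a : EuclideanSpace ℝ (Fin n)) :
    fderiv ℝ (fun z => fderiv ℝ g z z) y a = fderiv ℝ (fderiv ℝ g) y a y + fderiv ℝ g y a := by
  rw [fderiv_clm_apply hg differentiableAt_fun_id]
  simp
  ring

lemma lap_eq_sum {g : EuclideanSpace ℝ (Fin n) → ℝ} {y : EuclideanSpace ℝ (Fin n)}
    (hg : DifferentiableAt ℝ (fderiv ℝ g) y) :
    lap g y = ∑ i, fderiv ℝ (fderiv ℝ g) y (ee i) (ee i) := by
  unfold lap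
  exact Finset.sum_congr rfl fun i _ => fderiv_apply_const hg _ _

lemma q_hasFDerivAt (y : EuclideanSpace ℝ (Fin n)) :
    HasFDerivAt (fun z : EuclideanSpace ℝ (Fin n) => ‖z‖^2 - 1)
      ((fderivInnerCLM ℝ (y, y)).comp ((ContinuousLinearMap.id ℝ _).prod
        (ContinuousLinearMap.id ℝ _))) y := by
  have h2 := ((hasFDerivAt_id y).inner ℝ (hasFDerivAt_id y)).sub_const 1
  convert h2 using 2 with z
  · rfl
  · rfl
  · simp only [id_eq]
    rw [real_inner_self_eq_norm_sq]
  · rfl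

lemma q_diff (y : EuclideanSpace ℝ (Fin n)) :
    DifferentiableAt ℝ (fun z : EuclideanSpace ℝ (Fin n) => ‖z‖^2 - 1) y :=
  (q_hasFDerivAt y).differentiableAt

lemma fderiv_q (y v : EuclideanSpace ℝ (Fin n)) :
    fderiv ℝ (fun z : EuclideanSpace ℝ (Fin n) => ‖z‖^2 - 1) y v = 2 * (inner ℝ y v : ℝ) := by
  rw [(q_hasFDerivAt y).fderiv]
  simp [fderivInnerCLM_apply, real_inner_comm]
  have : ∑ i, v i * y i = ∑ i, y i * v i := Finset.sum_congr rfl fun i _ => mul_comm _ _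
  ring

lemma inner_ee (y : EuclideanSpace ℝ (Fin n)) (i : Fin n) :
    (inner ℝ y (ee i) : ℝ) = y i := by
  simp [ee, EuclideanSpace.inner_single_right]

lemma fderiv_proj (y : EuclideanSpace ℝ (Fin n)) (i : Fin n) :
    fderiv ℝ (fun z : EuclideanSpace ℝ (Fin n) => z i) y = EuclideanSpace.proj (𝕜 := ℝ) i :=
  (EuclideanSpace.proj (𝕜 := ℝ) i).fderiv

lemma proj_diff (y : EuclideanSpace ℝ (Fin n)) (i : Fin n) :
    DifferentiableAt ℝ (fun z : EuclideanSpace ℝ (Fin n) => z i) y :=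
  (EuclideanSpace.proj (𝕜 := ℝ) i).differentiableAt

/-- If `w` is a smooth harmonic function on an open set `U ⊆ ℝⁿ` and
`u(x) = -2w(x) + (|x|² - 1)ℰw(x)`, then `ℰ(Δu) = 2n·ℰ²w + 4·ℰ³w` on `U`. -/
theorem euler_lap_of_u (n : ℕ) (U : Set (EuclideanSpace ℝ (Fin n))) (hU : IsOpen U)
    (w : EuclideanSpace ℝ (Fin n) → ℝ) (hw : ContDiffOn ℝ (⊤ : ℕ∞) w U)
    (hharm : ∀ x ∈ U, lap w x = 0)
    (u : EuclideanSpace ℝ (Fin n) → ℝ)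
    (hu : ∀ x, u x = -2 * w x + (‖x‖ ^ 2 - 1) * euler w x) :
    ∀ x ∈ U, euler (lap u) x =
      2 * (n : ℝ) * euler (euler w) x + 4 * euler (euler (euler w)) x := by
  -- smoothness bookkeeping
  have hC : ∀ y ∈ U, ContDiffAt ℝ (⊤ : ℕ∞) w y := fun y hy => hw.contDiffAt (hU.mem_nhds hy)
  have hC1 : ∀ y ∈ U, ContDiffAt ℝ (⊤ : ℕ∞) (fderiv ℝ w) y := fun y hy =>
    (hC y hy).fderiv_right (by simp)
  have hC2 : ∀ y ∈ U, ContDiffAt ℝ (⊤ : ℕ∞) (fderiv ℝ (fderiv ℝ w)) y := fun y hy =>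
    (hC1 y hy).fderiv_right (by simp)
  have hd0 : ∀ y ∈ U, DifferentiableAt ℝ w y := fun y hy => (hC y hy).differentiableAt (by simp)
  have hd1 : ∀ y ∈ U, DifferentiableAt ℝ (fderiv ℝ w) y := fun y hy =>
    (hC1 y hy).differentiableAt (by simp)
  have hd2 : ∀ y ∈ U, DifferentiableAt ℝ (fderiv ℝ (fderiv ℝ w)) y := fun y hy =>
    (hC2 y hy).differentiableAt (by simp)
  have heuler : euler w = fun z => fderiv ℝ w z z := rfl
  have hCg : ∀ y ∈ U, ContDiffAt ℝ (⊤ : ℕ∞) (euler w) y := fun y hy => by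
    have : ContDiffAt ℝ (⊤ : ℕ∞) (fun z => fderiv ℝ w z z) y := (hC1 y hy).clm_apply contDiffAt_id
    rw [heuler]; exact this
  have hCg1 : ∀ y ∈ U, ContDiffAt ℝ (⊤ : ℕ∞) (fderiv ℝ (euler w)) y := fun y hy =>
    (hCg y hy).fderiv_right (by simp)
  have hdg : ∀ y ∈ U, DifferentiableAt ℝ (euler w) y := fun y hy =>
    (hCg y hy).differentiableAt (by simp)
  have hdg1 : ∀ y ∈ U, DifferentiableAt ℝ (fderiv ℝ (euler w)) y := fun y hy =>
    (hCg1 y hy).differentiableAt (by simp)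
  -- symmetry of higher derivatives
  have hsymK : ∀ y ∈ U, ∀ a b, fderiv ℝ (fderiv ℝ w) y a b = fderiv ℝ (fderiv ℝ w) y b a :=
    fun y hy => (hC y hy).isSymmSndFDerivAt (by rw [minSmoothness_of_isRCLikeNormedField]; exact WithTop.coe_le_coe.mpr (le_top : (2 : ℕ∞) ≤ ⊤))
  have hsymT : ∀ y ∈ U, ∀ a b, fderiv ℝ (fderiv ℝ (fderiv ℝ w)) y a b
      = fderiv ℝ (fderiv ℝ (fderiv ℝ w)) y b a := by
    intro y hy a b
    refine second_derivative_symmetric_of_eventually (f := fderiv ℝ w) ?_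
      ((hd2 y hy).hasFDerivAt) a b
    filter_upwards [hU.mem_nhds hy] with z hz
    exact (hd1 z hz).hasFDerivAt
  have hsymT23 : ∀ y ∈ U, ∀ a b c, fderiv ℝ (fderiv ℝ (fderiv ℝ w)) y a b c
      = fderiv ℝ (fderiv ℝ (fderiv ℝ w)) y a c b := by
    intro y hy a b c
    have h1 := fderiv_apply_const2 (hd2 y hy) b c a
    have h3 := fderiv_apply_const2 (hd2 y hy) c b a
    have hev : (fun z => fderiv ℝ (fderiv ℝ w) z b c)
        =ᶠ[𝓝 y] (fun z => fderiv ℝ (fderiv ℝ w) z c b) := by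
      filter_upwards [hU.mem_nhds hy] with z hz using hsymK z hz b c
    rw [← h1, ← h3, hev.fderiv_eq]
  -- vanishing of ∑ᵢ Kᵢᵢ on U
  have Main0 : ∀ y ∈ U, (∑ i, fderiv ℝ (fderiv ℝ w) y (ee i) (ee i)) = 0 := by
    intro y hy
    rw [← lap_eq_sum (hd1 y hy)]
    exact hharm y hy
  -- vanishing of ∑ᵢ T y y eᵢ eᵢ on U
  have MainT : ∀ y ∈ U, (∑ i, fderiv ℝ (fderiv ℝ (fderiv ℝ w)) y y (ee i) (ee i)) = 0 := by
    intro y hy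
    have hdiff : ∀ i : Fin n, i ∈ Finset.univ → DifferentiableAt ℝ
        (fun z => fderiv ℝ (fderiv ℝ w) z (ee i) (ee i)) y := fun i _ =>
      ((hd2 y hy).clm_apply (differentiableAt_const _)).clm_apply (differentiableAt_const _)
    have h2 : fderiv ℝ (fun z => ∑ i, fderiv ℝ (fderiv ℝ w) z (ee i) (ee i)) y y
        = ∑ i, fderiv ℝ (fderiv ℝ (fderiv ℝ w)) y y (ee i) (ee i) := by
      rw [fderiv_fun_sum hdiff, ContinuousLinearMap.sum_apply]
      exact Finset.sum_congr rfl fun i _ => fderiv_apply_const2 (hd2 y hy) _ _ _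
    rw [← h2]
    have hev : (fun z => ∑ i, fderiv ℝ (fderiv ℝ w) z (ee i) (ee i))
        =ᶠ[𝓝 y] (fun _ => (0 : ℝ)) := by
      filter_upwards [hU.mem_nhds hy] with z hz using Main0 z hz
    rw [hev.fderiv_eq]
    simp
  -- the Laplacian of ℰw vanishes on U
  have Main1 : ∀ y ∈ U, lap (euler w) y = 0 := by
    intro y hy
    have hterm : ∀ i, fderiv ℝ (fun z => fderiv ℝ (euler w) z (ee i)) y (ee i)
        = fderiv ℝ (fderiv ℝ (fderiv ℝ w)) y (ee i) (ee i) y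
          + 2 * fderiv ℝ (fderiv ℝ w) y (ee i) (ee i) := by
      intro i
      have hev : (fun z => fderiv ℝ (euler w) z (ee i)) =ᶠ[𝓝 y]
          (fun z => fderiv ℝ (fderiv ℝ w) z (ee i) z + fderiv ℝ w z (ee i)) := by
        filter_upwards [hU.mem_nhds hy] with z hz
        rw [heuler, fderiv_euler_apply (hd1 z hz) (ee i)]
      rw [hev.fderiv_eq]
      have dA : DifferentiableAt ℝ (fun z => fderiv ℝ (fderiv ℝ w) z (ee i) z) y :=
        ((hd2 y hy).clm_apply (differentiableAt_const _)).clm_apply differentiableAt_fun_id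
      have dB : DifferentiableAt ℝ (fun z => fderiv ℝ w z (ee i)) y :=
        (hd1 y hy).clm_apply (differentiableAt_const _)
      rw [fderiv_fun_add dA dB, ContinuousLinearMap.add_apply,
        fderiv_apply_const (hd1 y hy) (ee i) (ee i)]
      have h1 : fderiv ℝ (fun z => fderiv ℝ (fderiv ℝ w) z (ee i) z) y (ee i)
          = fderiv ℝ (fderiv ℝ (fderiv ℝ w)) y (ee i) (ee i) y
            + fderiv ℝ (fderiv ℝ w) y (ee i) (ee i) := by
        rw [fderiv_clm_apply ((hd2 y hy).clm_apply (differentiableAt_const _))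
          differentiableAt_fun_id]
        simp only [ContinuousLinearMap.add_apply, ContinuousLinearMap.comp_apply,
          ContinuousLinearMap.flip_apply, fderiv_id', ContinuousLinearMap.coe_id', id_eq]
        rw [fderiv_apply_const (hd2 y hy) (ee i) (ee i)]
        ring
      rw [h1]
      ring
    have hlap : lap (euler w) y
        = ∑ i, (fderiv ℝ (fderiv ℝ (fderiv ℝ w)) y (ee i) (ee i) y
          + 2 * fderiv ℝ (fderiv ℝ w) y (ee i) (ee i)) := by
      unfold lap
      exact Finset.sum_congr rfl fun i _ => hterm i
    have hswap : ∀ i, fderiv ℝ (fderiv ℝ (fderiv ℝ w)) y (ee i) (ee i) y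
        = fderiv ℝ (fderiv ℝ (fderiv ℝ w)) y y (ee i) (ee i) := by
      intro i
      calc fderiv ℝ (fderiv ℝ (fderiv ℝ w)) y (ee i) (ee i) y
          = fderiv ℝ (fderiv ℝ (fderiv ℝ w)) y (ee i) y (ee i) := hsymT23 y hy _ _ _
        _ = fderiv ℝ (fderiv ℝ (fderiv ℝ w)) y y (ee i) (ee i) := by
            rw [hsymT y hy (ee i) y]
    rw [hlap, Finset.sum_add_distrib]
    rw [Finset.sum_congr rfl fun i _ => hswap i, MainT y hy]
    have : ∑ i, 2 * fderiv ℝ (fderiv ℝ w) y (ee i) (ee i)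
        = 2 * ∑ i, fderiv ℝ (fderiv ℝ w) y (ee i) (ee i) := by rw [Finset.mul_sum]
    rw [this, Main0 y hy]
    ring
  -- the key formula for lap u on U
  have Main2 : ∀ y ∈ U, lap u y = 2 * (n : ℝ) * euler w y + 4 * euler (euler w) y := by
    intro y hy
    have hu' : u = fun z => -2 * w z + (‖z‖ ^ 2 - 1) * euler w z := funext hu
    have hduU : ∀ z ∈ U, ∀ i : Fin n, fderiv ℝ u z (ee i)
        = -2 * fderiv ℝ w z (ee i) + 2 * z i * euler w z
          + (‖z‖ ^ 2 - 1) * fderiv ℝ (euler w) z (ee i) := by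
      intro z hz i
      rw [hu']
      rw [fderiv_fun_add ((hd0 z hz).const_mul (-2)) ((q_diff z).fun_mul (hdg z hz)),
        ContinuousLinearMap.add_apply, fderiv_const_mul (hd0 z hz),
        fderiv_fun_mul (q_diff z) (hdg z hz)]
      simp only [ContinuousLinearMap.add_apply, ContinuousLinearMap.smul_apply, smul_eq_mul]
      rw [fderiv_q z (ee i), inner_ee]
      ring
    have hterm : ∀ i : Fin n, fderiv ℝ (fun z => fderiv ℝ u z (ee i)) y (ee i)
        = -2 * fderiv ℝ (fderiv ℝ w) y (ee i) (ee i) + 2 * euler w y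
          + 4 * (y i * fderiv ℝ (euler w) y (ee i))
          + (‖y‖ ^ 2 - 1) * fderiv ℝ (fderiv ℝ (euler w)) y (ee i) (ee i) := by
      intro i
      have hev : (fun z => fderiv ℝ u z (ee i)) =ᶠ[𝓝 y]
          (fun z => -2 * fderiv ℝ w z (ee i) + 2 * z i * euler w z
            + (‖z‖ ^ 2 - 1) * fderiv ℝ (euler w) z (ee i)) := by
        filter_upwards [hU.mem_nhds hy] with z hz using hduU z hz i
      rw [hev.fderiv_eq]
      have dA : DifferentiableAt ℝ (fun z => fderiv ℝ w z (ee i)) y :=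
        (hd1 y hy).clm_apply (differentiableAt_const _)
      have dB : DifferentiableAt ℝ
          (fun z : EuclideanSpace ℝ (Fin n) => 2 * z i * euler w z) y :=
        ((proj_diff y i).const_mul 2).mul (hdg y hy)
      have dC : DifferentiableAt ℝ
          (fun z => (‖z‖ ^ 2 - 1) * fderiv ℝ (euler w) z (ee i)) y :=
        (q_diff y).mul ((hdg1 y hy).clm_apply (differentiableAt_const _))
      rw [fderiv_fun_add ((dA.const_mul (-2)).fun_add dB) dC, ContinuousLinearMap.add_apply,
        fderiv_fun_add (dA.const_mul (-2)) dB, ContinuousLinearMap.add_apply,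
        fderiv_const_mul dA (-2),
        fderiv_fun_mul ((proj_diff y i).const_mul 2) (hdg y hy),
        fderiv_fun_mul (q_diff y) ((hdg1 y hy).clm_apply (differentiableAt_const _))]
      simp only [ContinuousLinearMap.add_apply, ContinuousLinearMap.smul_apply, smul_eq_mul]
      rw [fderiv_apply_const (hd1 y hy) (ee i) (ee i),
        fderiv_const_mul (proj_diff y i) 2]
      simp only [ContinuousLinearMap.smul_apply, smul_eq_mul]
      rw [fderiv_proj y i]
      have hproj : EuclideanSpace.proj (𝕜 := ℝ) i (ee i) = 1 := by
        simp [ee, EuclideanSpace.single_apply]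
      rw [hproj, fderiv_q y (ee i), inner_ee,
        fderiv_apply_const (hdg1 y hy) (ee i) (ee i)]
      ring
    have hlap : lap u y
        = ∑ i, (-2 * fderiv ℝ (fderiv ℝ w) y (ee i) (ee i) + 2 * euler w y
          + 4 * (y i * fderiv ℝ (euler w) y (ee i))
          + (‖y‖ ^ 2 - 1) * fderiv ℝ (fderiv ℝ (euler w)) y (ee i) (ee i)) := by
      unfold lap
      exact Finset.sum_congr rfl fun i _ => hterm i
    rw [hlap]
    rw [Finset.sum_add_distrib, Finset.sum_add_distrib, Finset.sum_add_distrib]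
    have e1 : ∑ i : Fin n, -2 * fderiv ℝ (fderiv ℝ w) y (ee i) (ee i) = 0 := by
      rw [← Finset.mul_sum, Main0 y hy, mul_zero]
    have e2 : ∑ _i : Fin n, 2 * euler w y = 2 * (n : ℝ) * euler w y := by
      rw [Finset.sum_const, Finset.card_univ, Fintype.card_fin, nsmul_eq_mul]
      ring
    have e3 : ∑ i : Fin n, 4 * (y i * fderiv ℝ (euler w) y (ee i))
        = 4 * euler (euler w) y := by
      rw [← Finset.mul_sum, ← clm_apply_eq_sum (fderiv ℝ (euler w) y) y]
      rfl
    have e4 : ∑ i : Fin n, (‖y‖ ^ 2 - 1) * fderiv ℝ (fderiv ℝ (euler w)) y (ee i) (ee i)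
        = 0 := by
      rw [← Finset.mul_sum, ← lap_eq_sum (hdg1 y hy), Main1 y hy, mul_zero]
    rw [e1, e2, e3, e4]
    ring
  -- conclusion
  intro x hx
  have hdgg : DifferentiableAt ℝ (euler (euler w)) x := by
    have : DifferentiableAt ℝ (fun z => fderiv ℝ (euler w) z z) x :=
      (hdg1 x hx).clm_apply differentiableAt_fun_id
    exact this
  have hev : lap u =ᶠ[𝓝 x]
      (fun y => 2 * (n : ℝ) * euler w y + 4 * euler (euler w) y) := by
    filter_upwards [hU.mem_nhds hx] with z hz using Main2 z hz
  have hstep : euler (lap u) x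
      = fderiv ℝ (fun y => 2 * (n : ℝ) * euler w y + 4 * euler (euler w) y) x x := by
    show fderiv ℝ (lap u) x x = _
    rw [hev.fderiv_eq]
  rw [hstep]
  rw [fderiv_fun_add ((hdg x hx).const_mul (2 * (n : ℝ))) (hdgg.const_mul 4),
    ContinuousLinearMap.add_apply, fderiv_const_mul (hdg x hx),
    fderiv_const_mul hdgg]
  simp only [ContinuousLinearMap.smul_apply, smul_eq_mul]
  rfl
end

section
/- Let U ⊆ ℝⁿ be an open set containing the unit sphere ∂𝔹 = {y ∈ ℝⁿ : |y| = 1}, let w be a smooth harmonic function on U, and define u(x) = −2w(x) + (|x|² − 1)ℰw(x). Then for every y ∈ ∂𝔹, Δu(y) − ℰ²u(y) = ((2n − 4)ℰw + 2ℰ²w)(y). (Since ℰu vanishes on ∂𝔹, the quantity Δu(y) − ℰ²u(y) equals the Laplace–Beltrami operator of the unit sphere applied to the restriction u|_{∂𝔹} at y.) -/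
lemma apply_sum_single {n : ℕ} (L : EuclideanSpace ℝ (Fin n) →L[ℝ] ℝ) (y : EuclideanSpace ℝ (Fin n)) :
    ∑ i : Fin n, y i * L (EuclideanSpace.single i 1) = L y := by
  have hrepr : ∑ i : Fin n, y i • (EuclideanSpace.single i 1 : EuclideanSpace ℝ (Fin n)) = y := by
    ext j
    rw [show ((∑ i : Fin n, y i • (EuclideanSpace.single i 1 : EuclideanSpace ℝ (Fin n))) j)
        = ∑ i : Fin n, (y i • (EuclideanSpace.single i 1 : EuclideanSpace ℝ (Fin n))) j
      from by rw [WithLp.ofLp_sum, Finset.sum_apply]]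
    simp [EuclideanSpace.single_apply]
  conv_rhs => rw [← hrepr]
  rw [map_sum]
  simp

/-- If `w` is a smooth harmonic function on an open set `U ⊆ ℝⁿ` containing
the unit sphere and `u(x) = -2w(x) + (|x|² - 1)ℰw(x)`, then for every `y` with `|y| = 1`,
`Δu(y) - ℰ²u(y) = ((2n - 4)ℰw + 2ℰ²w)(y)`. -/
theorem sphere_laplacian_of_u (n : ℕ) (U : Set (EuclideanSpace ℝ (Fin n))) (hU : IsOpen U)
    (hsub : ∀ y : EuclideanSpace ℝ (Fin n), ‖y‖ = 1 → y ∈ U)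
    (w : EuclideanSpace ℝ (Fin n) → ℝ) (hw : ContDiffOn ℝ (⊤ : ℕ∞) w U)
    (hharm : ∀ x ∈ U, lap w x = 0)
    (u : EuclideanSpace ℝ (Fin n) → ℝ)
    (hu : ∀ x, u x = -2 * w x + (‖x‖ ^ 2 - 1) * euler w x) :
    ∀ y : EuclideanSpace ℝ (Fin n), ‖y‖ = 1 →
      lap u y - euler (euler u) y =
        (2 * (n : ℝ) - 4) * euler w y + 2 * euler (euler w) y := by
  have hueq : u = fun x => -2 * w x + (‖x‖ ^ 2 - 1) * fderiv ℝ w x x := by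
    funext x; rw [hu x]; rfl
  subst hueq
  intro y hy
  have hyU : y ∈ U := hsub y hy
  have hUy : U ∈ nhds y := hU.mem_nhds hyU
  set f₁ := fderiv ℝ w with hf1
  set f₂ := fderiv ℝ f₁ with hf2
  set f₃ := fderiv ℝ f₂ with hf3
  have hc1 : ContDiffOn ℝ (⊤ : ℕ∞) f₁ U := hw.fderiv_of_isOpen hU (by simp)
  have hc2 : ContDiffOn ℝ (⊤ : ℕ∞) f₂ U := hc1.fderiv_of_isOpen hU (by simp)
  have hdw : ∀ x ∈ U, HasFDerivAt w (f₁ x) x := fun x hx =>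
    ((hw.differentiableOn (by simp) x hx).differentiableAt (hU.mem_nhds hx)).hasFDerivAt
  have hd1 : ∀ x ∈ U, HasFDerivAt f₁ (f₂ x) x := fun x hx =>
    ((hc1.differentiableOn (by simp) x hx).differentiableAt (hU.mem_nhds hx)).hasFDerivAt
  have hd2 : ∀ x ∈ U, HasFDerivAt f₂ (f₃ x) x := fun x hx =>
    ((hc2.differentiableOn (by simp) x hx).differentiableAt (hU.mem_nhds hx)).hasFDerivAt
  have Hq := fun x : EuclideanSpace ℝ (Fin n) =>
    (hasStrictFDerivAt_norm_sq x).hasFDerivAt.sub_const (1 : ℝ)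
  have Hg : ∀ x ∈ U, HasFDerivAt (fun z => f₁ z z) (f₁ x + (f₂ x).flip x) x := by
    intro x hx
    have h := (hd1 x hx).clm_apply (hasFDerivAt_id x)
    rwa [ContinuousLinearMap.comp_id] at h
  have Hu := fun (x : EuclideanSpace ℝ (Fin n)) (hx : x ∈ U) =>
    ((hdw x hx).const_mul (-2 : ℝ)).add ((Hq x).mul (Hg x hx))
  have heuler_u : ∀ x ∈ U,
      euler (fun z => -2 * w z + (‖z‖ ^ 2 - 1) * f₁ z z) x
        = (‖x‖ ^ 2 - 1) * (3 * f₁ x x + (f₂ x x) x) := by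
    intro x hx
    have hx' := HasFDerivAt.fderiv (f := fun z => -2 * w z + (‖z‖ ^ 2 - 1) * f₁ z z) (Hu x hx)
    simp only [euler]
    rw [hx']
    simp only [ContinuousLinearMap.add_apply, ContinuousLinearMap.smul_apply,
      ContinuousLinearMap.coe_smul', Pi.smul_apply,
      ContinuousLinearMap.flip_apply, innerSL_apply_apply, real_inner_self_eq_norm_sq, smul_eq_mul]
    ring
  have heV : euler (fun z => -2 * w z + (‖z‖ ^ 2 - 1) * f₁ z z)
      =ᶠ[nhds y] fun x => (‖x‖ ^ 2 - 1) * (3 * f₁ x x + (f₂ x x) x) :=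
    Filter.eventuallyEq_of_mem hUy heuler_u
  have hhQ := ((hd2 y hyU).clm_apply (hasFDerivAt_id y)).clm_apply (hasFDerivAt_id y)
  simp only [id_eq, ContinuousLinearMap.comp_id] at hhQ
  have hh := ((Hg y hyU).const_mul (3 : ℝ)).add hhQ
  have hV := (Hq y).mul hh
  have h2 : euler (euler (fun z => -2 * w z + (‖z‖ ^ 2 - 1) * f₁ z z)) y
      = 6 * f₁ y y + 2 * (f₂ y y) y := by
    simp only [euler]
    rw [heV.fderiv_eq, HasFDerivAt.fderiv (f := fun x => (‖x‖ ^ 2 - 1) * (3 * f₁ x x + (f₂ x x) x)) hV]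
    simp only [ContinuousLinearMap.add_apply, ContinuousLinearMap.smul_apply,
      ContinuousLinearMap.coe_smul', Pi.smul_apply, ContinuousLinearMap.flip_apply,
      innerSL_apply_apply, real_inner_self_eq_norm_sq, smul_eq_mul, hy, one_pow, sub_self, Pi.add_apply]
    ring
  have hterm : ∀ i : Fin n,
      fderiv ℝ (fun x => fderiv ℝ (fun z => -2 * w z + (‖z‖ ^ 2 - 1) * f₁ z z) x
          (EuclideanSpace.single i 1)) y (EuclideanSpace.single i 1)
        = -2 * (f₂ y (EuclideanSpace.single i 1)) (EuclideanSpace.single i 1)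
          + 2 * f₁ y y
          + 4 * (y i * f₁ y (EuclideanSpace.single i 1))
          + 4 * (y i * (f₂ y (EuclideanSpace.single i 1)) y) := by
    intro i
    set v : EuclideanSpace ℝ (Fin n) := EuclideanSpace.single i 1 with hv
    have heq : (fun x => fderiv ℝ (fun z => -2 * w z + (‖z‖ ^ 2 - 1) * f₁ z z) x v)
        =ᶠ[nhds y] (fun x => -2 * f₁ x v
          + ((‖x‖ ^ 2 - 1) * (f₁ x v + (f₂ x v) x) + f₁ x x * (2 * innerSL ℝ v x))) := by
      refine Filter.eventuallyEq_of_mem hUy fun x hx => ?_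
      rw [HasFDerivAt.fderiv (f := fun z => -2 * w z + (‖z‖ ^ 2 - 1) * f₁ z z) (Hu x hx)]
      simp only [ContinuousLinearMap.add_apply, ContinuousLinearMap.smul_apply,
        ContinuousLinearMap.coe_smul', Pi.smul_apply, ContinuousLinearMap.flip_apply,
        innerSL_apply_apply, smul_eq_mul]
      rw [real_inner_comm]
      ring
    have hA := (hd1 y hyU).clm_apply (hasFDerivAt_const v y)
    simp only [ContinuousLinearMap.comp_zero, zero_add] at hA
    have hB := ((hd2 y hyU).clm_apply (hasFDerivAt_const v y)).clm_apply (hasFDerivAt_id y)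
    simp only [id_eq, ContinuousLinearMap.comp_zero, zero_add,
      ContinuousLinearMap.comp_id] at hB
    have hL := ((innerSL ℝ v).hasFDerivAt (x := y)).const_mul (2 : ℝ)
    have hF := (hA.const_mul (-2 : ℝ)).add (((Hq y).mul (hA.add hB)).add ((Hg y hyU).mul hL))
    rw [heq.fderiv_eq, HasFDerivAt.fderiv (f := fun x => -2 * f₁ x v
          + ((‖x‖ ^ 2 - 1) * (f₁ x v + (f₂ x v) x) + f₁ x x * (2 * innerSL ℝ v x))) hF]
    simp only [ContinuousLinearMap.add_apply, ContinuousLinearMap.smul_apply,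
      ContinuousLinearMap.coe_smul', Pi.smul_apply, ContinuousLinearMap.flip_apply,
      innerSL_apply_apply, smul_eq_mul, hy, one_pow, sub_self, Pi.add_apply,
      EuclideanSpace.inner_single_left, EuclideanSpace.inner_single_right,
      EuclideanSpace.single_apply, RCLike.star_def, conj_trivial, if_pos rfl]
    simp only [hv, EuclideanSpace.inner_single_left, EuclideanSpace.inner_single_right,
      EuclideanSpace.single_apply, RCLike.star_def, conj_trivial, if_pos rfl,
      starRingEnd_apply, star_trivial, mul_one, one_mul, eq_self_iff_true, if_true]
    ring
  have hlapw : ∑ i : Fin n,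
      (f₂ y (EuclideanSpace.single i 1)) (EuclideanSpace.single i 1) = 0 := by
    have h := hharm y hyU
    simp only [lap, ← hf1] at h
    rw [← h]
    refine Finset.sum_congr rfl fun i _ => ?_
    have hAi := (hd1 y hyU).clm_apply (hasFDerivAt_const (EuclideanSpace.single i 1) y)
    simp only [ContinuousLinearMap.comp_zero, zero_add] at hAi
    rw [hAi.fderiv]
    simp [ContinuousLinearMap.flip_apply]
  have hlapu : lap (fun z => -2 * w z + (‖z‖ ^ 2 - 1) * f₁ z z) y
      = (2 * (n : ℝ) + 4) * f₁ y y + 4 * (f₂ y y) y := by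
    simp only [lap]
    have hs1 : ∑ i : Fin n, y i * f₁ y (EuclideanSpace.single i 1) = f₁ y y :=
      apply_sum_single (f₁ y) y
    have hs2 : ∑ i : Fin n, y i * (f₂ y (EuclideanSpace.single i 1)) y = (f₂ y y) y := by
      have := apply_sum_single ((f₂ y).flip y) y
      simpa only [ContinuousLinearMap.flip_apply] using this
    rw [Finset.sum_congr rfl fun i _ => hterm i]
    rw [Finset.sum_add_distrib, Finset.sum_add_distrib, Finset.sum_add_distrib,
      ← Finset.mul_sum, ← Finset.mul_sum, ← Finset.mul_sum, ← Finset.mul_sum,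
      hlapw, hs1, hs2, Finset.sum_const, Finset.card_univ, Fintype.card_fin,
      nsmul_eq_mul]
    push_cast
    ring
  have hew : euler w y = f₁ y y := rfl
  have heww : euler (euler w) y = f₁ y y + (f₂ y y) y := by
    have h : fderiv ℝ (euler w) y = f₁ y + (f₂ y).flip y := by exact (Hg y hyU).fderiv
    simp only [euler]
    rw [h]
    simp [ContinuousLinearMap.flip_apply]
  rw [hlapu, h2, hew, heww]
  push_cast
  ring
end

section
/- (Verification direction of Theorem 1.5.) Let n ≥ 2, let β ≥ 0 be a real number, let k be a nonnegative integer, let w_k be a harmonic homogeneous polynomial of degree k on ℝⁿ, and define u_k(x) = −2w_k(x) + k(|x|² − 1)w_k(x) and ς_k = k²(n + 2k) + βk(k + n − 2). Then: (a) Δ²u_k = 0 on ℝⁿ; (b) ℰu_k(y) = 0 for every y on the unit sphere ∂𝔹; and (c) ℰ(Δu_k)(y) + β(Δu_k(y) − ℰ²u_k(y)) + ς_k·u_k(y) = 0 for every y ∈ ∂𝔹. Thus u_k is an eigenfunction of the Wentzell bi-Laplace problem on the unit ball with eigenvalue ς_k, since for y ∈ ∂𝔹 the quantity ℰu_k(y)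 is the outward normal derivative ∂u_k/∂ν(y), ℰ(Δu_k)(y) is ∂(Δu_k)/∂ν(y), and (given ℰu_k|_{∂𝔹} = 0) Δu_k(y) − ℰ²u_k(y) is the Laplace–Beltrami operator of ∂𝔹 applied to u_k|_{∂𝔹}. -/
namespace MvPolynomial

variable {σ R : Type*} [CommRing R] [Fintype σ]

noncomputable def eulerOperator : Derivation R (MvPolynomial σ R) (MvPolynomial σ R) :=
  ∑ i : σ, (X i : MvPolynomial σ R) • pderiv i

theorem eulerOperator_apply (p : MvPolynomial σ R) :
    eulerOperator p = ∑ i, X i * pderiv i p := by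
  rw [eulerOperator, ← Derivation.coeFnAddMonoidHom_apply, map_sum, Finset.sum_apply]
  rfl

theorem IsHomogeneous.eulerOperator_eq {p : MvPolynomial σ R} {k : ℕ} (hp : p.IsHomogeneous k) :
    eulerOperator p = k • p := by
  rw [eulerOperator_apply, hp.sum_X_mul_pderiv]

noncomputable def laplacian : MvPolynomial σ R →ₗ[R] MvPolynomial σ R :=
  ∑ i, (pderiv i).toLinearMap ∘ₗ (pderiv i).toLinearMap

theorem laplacian_apply (p : MvPolynomial σ R) :
    laplacian p = ∑ i, pderiv i (pderiv i p) := by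
  simp [laplacian, LinearMap.sum_apply]

theorem laplacian_mul (p q : MvPolynomial σ R) :
    laplacian (p * q) =
      laplacian p * q + 2 * ∑ i, pderiv i p * pderiv i q + p * laplacian q := by
  simp only [laplacian_apply, Derivation.leibniz, smul_eq_mul, map_add, Finset.mul_sum,
    Finset.sum_mul, ← Finset.sum_add_distrib]
  refine Finset.sum_congr rfl fun i _ => ?_
  ring

variable (σ R) in
noncomputable def sumSq : MvPolynomial σ R := ∑ i, X i ^ 2

theorem isHomogeneous_sumSq : (sumSq σ R).IsHomogeneous 2 :=
  IsHomogeneous.sum _ _ _ fun i _ => isHomogeneous_X_pow i 2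

theorem pderiv_sumSq (i : σ) : pderiv i (sumSq σ R) = 2 * X i := by
  classical
  simp [sumSq, pderiv_X, Pi.single_apply]

theorem laplacian_sumSq : laplacian (sumSq σ R) = 2 * Fintype.card σ := by
  have h (i : σ) : pderiv i (pderiv i (sumSq σ R)) = 2 := by
    rw [pderiv_sumSq, ← map_ofNat C 2, pderiv_C_mul, pderiv_X_self, mul_one]
  simp only [laplacian_apply, h, Finset.sum_const, Finset.card_univ, nsmul_eq_mul, mul_comm]

theorem laplacian_sumSq_mul (p : MvPolynomial σ R) :
    laplacian (sumSq σ R * p) =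
      2 * Fintype.card σ * p + 4 * eulerOperator p + sumSq σ R * laplacian p := by
  rw [laplacian_mul, laplacian_sumSq, eulerOperator_apply]
  simp only [pderiv_sumSq, mul_assoc, ← Finset.mul_sum]
  ring

/-- The polynomial `u_k = -2 w + k (|x|² - 1) w`, regrouped. -/
noncomputable def wentzellPoly (k : ℕ) (p : MvPolynomial σ R) : MvPolynomial σ R :=
  k • (sumSq σ R * p) - (k + 2) • p

theorem IsHomogeneous.eulerOperator_wentzellPoly {p : MvPolynomial σ R} {k : ℕ}
    (hp : p.IsHomogeneous k) :
    eulerOperator (wentzellPoly k p) = (k * (k + 2)) • (sumSq σ R * p - p) := by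
  rw [wentzellPoly, map_sub, map_nsmul, map_nsmul, (isHomogeneous_sumSq.mul hp).eulerOperator_eq,
    hp.eulerOperator_eq, smul_sub, smul_smul, smul_smul, mul_comm (k + 2) k, add_comm 2 k]

theorem IsHomogeneous.laplacian_wentzellPoly {p : MvPolynomial σ R} {k : ℕ}
    (hp : p.IsHomogeneous k) (hΔp : laplacian p = 0) :
    laplacian (wentzellPoly k p) = (2 * k * (Fintype.card σ + 2 * k)) • p := by
  rw [wentzellPoly, map_sub, map_nsmul, map_nsmul, laplacian_sumSq_mul, hp.eulerOperator_eq, hΔp]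
  simp only [nsmul_eq_mul, smul_zero, mul_zero, add_zero, sub_zero]
  push_cast
  ring

variable {ι 𝕜 : Type*} [Fintype ι] [RCLike 𝕜]

theorem hasFDerivAt_eval (p : MvPolynomial ι 𝕜) (x : EuclideanSpace 𝕜 ι) :
    HasFDerivAt (fun y : EuclideanSpace 𝕜 ι => eval y p)
      (∑ i, eval x (pderiv i p) • EuclideanSpace.proj (𝕜 := 𝕜) i) x := by
  classical
  induction p using MvPolynomial.induction_on with
  | C a =>
    simp only [eval_C]
    refine (hasFDerivAt_const a x).congr_fderiv ?_
    ext v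
    simp
  | add p q hp hq =>
    simp only [map_add]
    refine (hp.add hq).congr_fderiv ?_
    ext v
    simp [add_mul, Finset.sum_add_distrib]
  | mul_X p i hp =>
    simp only [map_mul, eval_X]
    refine (hp.mul (EuclideanSpace.proj (𝕜 := 𝕜) i).hasFDerivAt).congr_fderiv ?_
    ext v
    simp [pderiv_X, Pi.single_apply, apply_ite, add_mul, Finset.sum_add_distrib, Finset.mul_sum,
      mul_assoc]

theorem fderiv_eval_apply (p : MvPolynomial ι 𝕜) (x v : EuclideanSpace 𝕜 ι) :
    fderiv 𝕜 (fun y : EuclideanSpace 𝕜 ι => eval y p) x v = ∑ i, eval x (pderiv i p) * v i := by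
  simp [(hasFDerivAt_eval p x).fderiv]

theorem fderiv_eval_single [DecidableEq ι] (p : MvPolynomial ι 𝕜) (x : EuclideanSpace 𝕜 ι)
    (i : ι) :
    fderiv 𝕜 (fun y : EuclideanSpace 𝕜 ι => eval y p) x (EuclideanSpace.single i 1) =
      eval x (pderiv i p) := by
  simp [fderiv_eval_apply, PiLp.single_apply]

theorem eval_sumSq (x : EuclideanSpace ℝ ι) :
    eval x (sumSq ι ℝ) = ‖x‖ ^ 2 := by
  simp [sumSq, EuclideanSpace.real_norm_sq_eq]

end MvPolynomial

open MvPolynomial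

theorem lap_eval {n : ℕ} (p : MvPolynomial (Fin n) ℝ) :
    lap (fun y : EuclideanSpace ℝ (Fin n) => eval y p) =
      fun x : EuclideanSpace ℝ (Fin n) => eval x (laplacian p) := by
  ext x
  simp only [lap, laplacian_apply, map_sum, fderiv_eval_single]

theorem euler_eval {n : ℕ} (p : MvPolynomial (Fin n) ℝ) :
    euler (fun y : EuclideanSpace ℝ (Fin n) => eval y p) =
      fun x : EuclideanSpace ℝ (Fin n) => eval x (eulerOperator p) := by
  ext x
  simp [euler, fderiv_eval_apply, eulerOperator_apply, mul_comm]

theorem wentzell_eigenfunction_verification_general (n : ℕ) (β : ℝ)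
    (k : ℕ) (P : MvPolynomial (Fin n) ℝ) (hP : P.IsHomogeneous k)
    (hPharm : ∀ x : EuclideanSpace ℝ (Fin n), lap (fun y => MvPolynomial.eval y P) x = 0)
    (u : EuclideanSpace ℝ (Fin n) → ℝ)
    (hu : ∀ x, u x = -2 * MvPolynomial.eval x P +
      (k : ℝ) * (‖x‖ ^ 2 - 1) * MvPolynomial.eval x P)
    (ς : ℝ)
    (hς : ς = (k : ℝ) ^ 2 * ((n : ℝ) + 2 * (k : ℝ)) +
      β * (k : ℝ) * ((k : ℝ) + (n : ℝ) - 2)) :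
    (∀ x : EuclideanSpace ℝ (Fin n), lap (lap u) x = 0) ∧
    (∀ y : EuclideanSpace ℝ (Fin n), ‖y‖ = 1 → euler u y = 0) ∧
    (∀ y : EuclideanSpace ℝ (Fin n), ‖y‖ = 1 →
      euler (lap u) y + β * (lap u y - euler (euler u) y) + ς * u y = 0) := by
  have hΔP : laplacian P = 0 :=
    MvPolynomial.funext fun x => by simpa [lap_eval] using hPharm (WithLp.toLp 2 x)
  obtain rfl : u = fun x : EuclideanSpace ℝ (Fin n) => eval x (wentzellPoly k P) :=
    funext fun x => by simp [hu, wentzellPoly, eval_sumSq]; ring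
  simp only [lap_eval, euler_eval]
  simp only [hP.laplacian_wentzellPoly hΔP, hP.eulerOperator_wentzellPoly, map_nsmul, map_sub, hΔP,
    hP.eulerOperator_eq, (isHomogeneous_sumSq.mul hP).eulerOperator_eq]
  refine ⟨fun x => by simp, fun y hy => ?_, fun y hy => ?_⟩
  · simp [eval_sumSq, hy]
  · simp [wentzellPoly, eval_sumSq, hy, hς]
    ring

/-- verification direction of Theorem 1.5: If `n ≥ 2`, `β ≥ 0`, `w_k` is a
harmonic homogeneous polynomial of degree `k` on `ℝⁿ`, `u_k(x) = -2w_k(x) + k(|x|²-1)w_k(x)`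
and `ς_k = k²(n+2k) + βk(k+n-2)`, then: (a) `Δ²u_k = 0` on `ℝⁿ`; (b) `ℰu_k = 0` on the unit
sphere; (c) `ℰ(Δu_k) + β(Δu_k - ℰ²u_k) + ς_k·u_k = 0` on the unit sphere. Thus `u_k` is an
eigenfunction of the Wentzell bi-Laplace problem on the unit ball with eigenvalue `ς_k`. -/
theorem wentzell_eigenfunction_verification (n : ℕ) (hn : 2 ≤ n) (β : ℝ) (hβ : 0 ≤ β)
    (k : ℕ) (P : MvPolynomial (Fin n) ℝ) (hP : P.IsHomogeneous k)
    (hPharm : ∀ x : EuclideanSpace ℝ (Fin n), lap (fun y => MvPolynomial.eval y P) x = 0)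
    (u : EuclideanSpace ℝ (Fin n) → ℝ)
    (hu : ∀ x, u x = -2 * MvPolynomial.eval x P +
      (k : ℝ) * (‖x‖ ^ 2 - 1) * MvPolynomial.eval x P)
    (ς : ℝ)
    (hς : ς = (k : ℝ) ^ 2 * ((n : ℝ) + 2 * (k : ℝ)) +
      β * (k : ℝ) * ((k : ℝ) + (n : ℝ) - 2)) :
    (∀ x : EuclideanSpace ℝ (Fin n), lap (lap u) x = 0) ∧
    (∀ y : EuclideanSpace ℝ (Fin n), ‖y‖ = 1 → euler u y = 0) ∧
    (∀ y : EuclideanSpace ℝ (Fin n), ‖y‖ = 1 →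
      euler (lap u) y + β * (lap u y - euler (euler u) y) + ς * u y = 0) :=
  wentzell_eigenfunction_verification_general n β k P hP hPharm u hu ς hς
end
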